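/- Let n be a positive integer, ℓ a positive integer, and λ a positive integer with λℓ/2 ≤ (n+ℓ)/2 and λ ≤ n/2 + 1. Suppose the rows w_1,…,w_{λℓ/2} ∈ F_2^n of a (λℓ/2) × n matrix A over F_2 are chosen so that each w_i is a uniformly random nonzero vector conditioned only on the event that, for each block j, the λ rows w_{jλ+1},…,w_{jλ+λ} are linearly independent. Then the probability that A does not have full row rank (equivalently, that some target vector B ∈ F_2^{λℓ/2} has no solution X with A·X = B) is at most (λℓ/2)·(2^{(n+ℓ)/2} + 2^λ)/2^n. -/

import Mathlib

open Finset Submodule MeasureTheory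
open scoped ENNReal


lemma aux_li {K V : Type*} [DivisionRing K] [AddCommGroup V] [Module K V] :
    ∀ {m : ℕ} (w : Fin m → V),
      (∀ i, w i ∉ Submodule.span K {u | ∃ k, k < i ∧ w k = u}) → LinearIndependent K w := by
  intro m
  induction m with
  | zero => exact fun w _ => linearIndependent_empty_type
  | succ m ih =>
    intro w hw
    have h1 : LinearIndependent K (Fin.init w) := by
      apply ih
      intro i hi
      apply hw i.castSucc
      have hset : {u | ∃ k : Fin m, k < i ∧ Fin.init w k = u}
          = {u | ∃ k : Fin (m+1), k < i.castSucc ∧ w k = u} := by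
        ext u
        constructor
        · rintro ⟨k, hk, rfl⟩
          exact ⟨k.castSucc, Fin.castSucc_lt_castSucc_iff.2 hk, rfl⟩
        · rintro ⟨k, hk, rfl⟩
          have hki : (k : ℕ) < (i : ℕ) := by simpa [Fin.lt_def] using hk
          have hk' : (k : ℕ) < m := hki.trans i.2
          have hkk : Fin.castSucc ⟨k.1, hk'⟩ = k := Fin.ext (by simp)
          refine ⟨⟨k.1, hk'⟩, by simpa [Fin.lt_def] using hki, ?_⟩
          show w (Fin.castSucc ⟨k.1, hk'⟩) = w k
          rw [hkk]
      rw [← hset]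
      exact hi
    have h2 : w (Fin.last m) ∉ Submodule.span K (Set.range (Fin.init w)) := by
      have hset : Set.range (Fin.init w)
          = {u | ∃ k : Fin (m+1), k < Fin.last m ∧ w k = u} := by
        ext u
        constructor
        · rintro ⟨k, rfl⟩
          exact ⟨k.castSucc, Fin.castSucc_lt_last k, rfl⟩
        · rintro ⟨k, hk, rfl⟩
          have hk' : (k : ℕ) < m := by simpa [Fin.lt_def] using hk
          have hkk : Fin.castSucc ⟨k.1, hk'⟩ = k := Fin.ext (by simp)
          refine ⟨⟨k.1, hk'⟩, ?_⟩
          show w (Fin.castSucc ⟨k.1, hk'⟩) = w k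
          rw [hkk]
      rw [hset]
      exact hw (Fin.last m)
    have h3 := linearIndependent_fin_snoc.2 ⟨h1, h2⟩
    rwa [Fin.snoc_init_self] at h3

lemma card_span_le {n : ℕ} (T : Finset (Fin n → ZMod 2)) :
    Nat.card (Submodule.span (ZMod 2) (T : Set (Fin n → ZMod 2))) ≤ 2 ^ T.card := by
  classical
  have h2 : Nat.card (Submodule.span (ZMod 2) (T : Set (Fin n → ZMod 2)))
      = 2 ^ Module.finrank (ZMod 2)
          (Submodule.span (ZMod 2) (T : Set (Fin n → ZMod 2))) := by
    rw [Nat.card_eq_fintype_card]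
    have := Module.card_eq_pow_finrank (K := ZMod 2)
      (V := Submodule.span (ZMod 2) (T : Set (Fin n → ZMod 2)))
    simpa [ZMod.card] using this
  have h3 := finrank_span_finset_le_card (R := ZMod 2) T
  rw [h2]
  exact Nat.pow_le_pow_right (by norm_num) (by simpa [Set.finrank] using h3)


lemma nat_ineq (a lam n m : ℕ) (hm : 1 ≤ m) (hma : m ≤ a) (hlam : 1 ≤ lam) (hln : lam ≤ n) :
    2 ^ (m - 1) * 2 ^ n ≤ (2 ^ a + 2 ^ lam) * (2 ^ n - 2 ^ (lam - 1)) := by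
  obtain ⟨mm, rfl⟩ : ∃ mm, m = mm + 1 := ⟨m - 1, by omega⟩
  obtain ⟨nn, rfl⟩ : ∃ nn, n = nn + 1 := ⟨n - 1, by omega⟩
  obtain ⟨la, rfl⟩ : ∃ la, lam = la + 1 := ⟨lam - 1, by omega⟩
  obtain ⟨aa, rfl⟩ : ∃ aa, a = aa + 1 := ⟨a - 1, by omega⟩
  simp only [Nat.add_sub_cancel]
  have hla : la ≤ nn := by omega
  have hmm : mm ≤ aa := by omega
  have hsub : 2 ^ la ≤ 2 ^ (nn + 1) := Nat.pow_le_pow_right (by norm_num) (by omega)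
  have hexp : (2 ^ (aa+1) + 2 ^ (la+1)) * (2 ^ (nn+1) - 2 ^ la)
      = (2 ^ (aa+1) + 2 ^ (la+1)) * 2 ^ (nn+1) - (2 ^ (aa+1) + 2 ^ (la+1)) * 2 ^ la := by
    rw [Nat.mul_sub]
  rw [hexp]
  apply Nat.le_sub_of_add_le
  have e1 : 2 ^ (aa+1) * 2 ^ la ≤ 2 ^ (aa+1) * 2 ^ nn :=
    Nat.mul_le_mul_left _ (Nat.pow_le_pow_right (by norm_num) hla)
  have e2 : 2 ^ mm * 2 ^ (nn+1) ≤ 2 ^ aa * 2 ^ (nn+1) :=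
    Nat.mul_le_mul_right _ (Nat.pow_le_pow_right (by norm_num) hmm)
  have e3 : 2 ^ (la+1) * 2 ^ la ≤ 2 ^ (la+1) * 2 ^ (nn+1) :=
    Nat.mul_le_mul_left _ (Nat.pow_le_pow_right (by norm_num) (by omega))
  calc 2 ^ mm * 2 ^ (nn+1) + (2 ^ (aa+1) + 2 ^ (la+1)) * 2 ^ la
      = 2 ^ mm * 2 ^ (nn+1) + (2 ^ (aa+1) * 2 ^ la + 2 ^ (la+1) * 2 ^ la) := by ring
    _ ≤ 2 ^ aa * 2 ^ (nn+1) + (2 ^ (aa+1) * 2 ^ nn + 2 ^ (la+1) * 2 ^ (nn+1)) :=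
        Nat.add_le_add e2 (Nat.add_le_add e1 e3)
    _ = (2 ^ (aa+1) + 2 ^ (la+1)) * 2 ^ (nn+1) := by ring

lemma per_index_bound (n lam m : ℕ) (hlam : 0 < lam) (hlamn : lam ≤ n)
    (μ : PMF (Fin m → Fin n → ZMod 2)) (i : Fin m)
    (hsupp : μ.toOuterMeasure {w | w i = 0 ∨ w i ∈ Submodule.span (ZMod 2)
        {u | ∃ k : Fin m, k < i ∧ (k : ℕ) / lam = (i : ℕ) / lam ∧ w k = u}} = 0)
    (hunif : ∀ (p : Fin m → Fin n → ZMod 2) (v v' : Fin n → ZMod 2),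
      (v ≠ 0 ∧ v ∉ Submodule.span (ZMod 2)
        {u | ∃ k : Fin m, k < i ∧ (k : ℕ) / lam = (i : ℕ) / lam ∧ p k = u}) →
      (v' ≠ 0 ∧ v' ∉ Submodule.span (ZMod 2)
        {u | ∃ k : Fin m, k < i ∧ (k : ℕ) / lam = (i : ℕ) / lam ∧ p k = u}) →
      μ.toOuterMeasure {w | (∀ k, k < i → w k = p k) ∧ w i = v}
        = μ.toOuterMeasure {w | (∀ k, k < i → w k = p k) ∧ w i = v'}) :
    μ.toOuterMeasure {w | w i ∈ Submodule.span (ZMod 2) {u | ∃ k, k < i ∧ w k = u}}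
      ≤ (2 : ℝ≥0∞) ^ (m - 1) / ((2 ^ n - 2 ^ (lam - 1) : ℕ) : ℝ≥0∞) := by
  classical
  set D : ℕ := 2 ^ n - 2 ^ (lam - 1) with hD
  have hDpos : 0 < D := by
    have h1 : 2 ^ (lam - 1) < 2 ^ n := Nat.pow_lt_pow_right one_lt_two (by omega)
    omega
  -- canonical prefixes
  set π : (Fin m → Fin n → ZMod 2) → (Fin m → Fin n → ZMod 2) := fun x k => if k < i then x k else 0 with hπ
  set C : Finset (Fin m → Fin n → ZMod 2) := Finset.univ.filter (fun p => π p = p) with hC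
  set Ev : (Fin m → Fin n → ZMod 2) → Set (Fin m → Fin n → ZMod 2) := fun p => {w | ∀ k, k < i → w k = p k} with hEv
  have hπC : ∀ x : Fin m → Fin n → ZMod 2, π x ∈ C := by
    intro x
    simp only [hC, Finset.mem_filter, Finset.mem_univ, true_and]
    funext k
    by_cases hk : k < i <;> simp [hπ, hk]
  have hxπ : ∀ x : Fin m → Fin n → ZMod 2, x ∈ Ev (π x) := by
    intro x k hk
    simp [hπ, hk]
  have huniq : ∀ (x p : Fin m → Fin n → ZMod 2), p ∈ C → x ∈ Ev p → p = π x := by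
    intro x p hp hx
    simp only [hC, Finset.mem_filter, Finset.mem_univ, true_and] at hp
    funext k
    by_cases hk : k < i
    · rw [hπ]; simp only [hk, if_true]; exact (hx k hk).symm
    · rw [hπ]; simp only [hk, if_false]
      conv_lhs => rw [← hp]
      simp [hπ, hk]
  -- decomposition over prefixes
  have hdecomp : ∀ T : Set (Fin m → Fin n → ZMod 2),
      μ.toOuterMeasure T = ∑ p ∈ C, μ.toOuterMeasure (T ∩ Ev p) := by
    intro T
    simp only [PMF.toOuterMeasure_apply_fintype]
    rw [Finset.sum_comm]
    refine Finset.sum_congr rfl fun x _ => ?_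
    by_cases hxT : x ∈ T
    · rw [Set.indicator_of_mem hxT]
      rw [Finset.sum_eq_single_of_mem (π x) (hπC x)]
      · rw [Set.indicator_of_mem (Set.mem_inter hxT (hxπ x))]
      · intro p hpC hpne
        refine Set.indicator_of_notMem ?_ _
        rintro ⟨-, hxE⟩
        exact hpne (huniq x p hpC hxE)
    · rw [Set.indicator_of_notMem hxT]
      refine (Finset.sum_eq_zero fun p _ => ?_).symm
      exact Set.indicator_of_notMem (fun h => hxT h.1) _

  -- the bad event
  set Bad  : Set (Fin m → Fin n → ZMod 2) := {w | w i ∈ Submodule.span (ZMod 2) {u | ∃ k, k < i ∧ w k = u}} with hBad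
  -- key bound for each prefix p
  have key : ∀ p : Fin m → Fin n → ZMod 2, μ.toOuterMeasure (Bad ∩ Ev p)
      ≤ (2 : ℝ≥0∞) ^ (m - 1) / (D : ℝ≥0∞) * μ.toOuterMeasure (Ev p) := by
    intro p
    set Bgen  : Set (Fin n → ZMod 2) := {u | ∃ k, k < i ∧ (k : ℕ) / lam = (i : ℕ) / lam ∧ p k = u} with hBgen
    set Sgen  : Set (Fin n → ZMod 2) := {u | ∃ k, k < i ∧ p k = u} with hSgen
    set G : Finset (Fin n → ZMod 2) := Finset.univ.filter (fun v => v ∉ Submodule.span (ZMod 2) Bgen) with hG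
    set Sfin : Finset (Fin n → ZMod 2) := Finset.univ.filter (fun v => v ∈ Submodule.span (ZMod 2) Sgen)
      with hSfin
    set F  : (Fin n → ZMod 2) → ℝ≥0∞ :=
      fun v => μ.toOuterMeasure {w | (∀ k, k < i → w k = p k) ∧ w i = v} with hF
    -- F vanishes outside the good set
    have hF0 : ∀ v : Fin n → ZMod 2, (v = 0 ∨ v ∈ Submodule.span (ZMod 2) Bgen) → F v = 0 := by
      intro v hv
      refine le_antisymm (le_trans (measure_mono ?_) (le_of_eq hsupp)) zero_le
      rintro w ⟨hwp, hwi⟩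
      have hgen : {u | ∃ k, k < i ∧ (k : ℕ) / lam = (i : ℕ) / lam ∧ w k = u} = Bgen := by
        ext u
        constructor
        · rintro ⟨k, hk, hb, rfl⟩
          exact ⟨k, hk, hb, (hwp k hk).symm⟩
        · rintro ⟨k, hk, hb, rfl⟩
          exact ⟨k, hk, hb, hwp k hk⟩
      rcases hv with rfl | hv
      · exact Or.inl hwi
      · refine Or.inr ?_
        rw [hgen, hwi]
        exact hv
    -- cardinality of the block span
    have hcardB : (Finset.univ.filter
        (fun v => v ∈ Submodule.span (ZMod 2) Bgen)).card ≤ 2 ^ (lam - 1) := by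
      set J : Finset (Fin m) :=
        Finset.univ.filter (fun k => k < i ∧ (k : ℕ) / lam = (i : ℕ) / lam) with hJ
      have hBgen' : Bgen = ((J.image p : Finset (Fin n → ZMod 2)) : Set (Fin n → ZMod 2)) := by
        ext u
        simp only [hBgen, Finset.coe_image, Set.mem_image, Finset.mem_coe, hJ,
          Finset.mem_filter, Finset.mem_univ, true_and, Set.mem_setOf_eq]
        constructor
        · rintro ⟨k, hk, hb, rfl⟩; exact ⟨k, ⟨hk, hb⟩, rfl⟩
        · rintro ⟨k, ⟨hk, hb⟩, rfl⟩; exact ⟨k, hk, hb, rfl⟩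
      have hJcard : J.card ≤ lam - 1 := by
        have hinj : J.card ≤ (Finset.Ico ((i : ℕ) - (lam - 1)) (i : ℕ)).card := by
          refine Finset.card_le_card_of_injOn (fun k : Fin m => (k : ℕ)) ?_ ?_
          · intro k hk
            simp only [hJ, Finset.mem_coe, Finset.mem_filter, Finset.mem_univ, true_and] at hk
            obtain ⟨hki, hkb⟩ := hk
            have h1 : (k : ℕ) < (i : ℕ) := hki
            have h2 : (i : ℕ) / lam * lam ≤ (k : ℕ) := by
              rw [← hkb]
              exact Nat.div_mul_le_self _ _
            have h3 := Nat.div_add_mod (i : ℕ) lam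
            have h4 : (i : ℕ) % lam < lam := Nat.mod_lt _ hlam
            have h5 : (i : ℕ) / lam * lam = lam * ((i : ℕ) / lam) := Nat.mul_comm _ _
            simp only [Finset.mem_coe, Finset.mem_Ico]
            omega
          · exact fun a _ b _ h => Fin.ext h
        have := Nat.card_Ico ((i : ℕ) - (lam - 1)) (i : ℕ)
        omega
      have hcs := card_span_le (J.image p)
      rw [← hBgen'] at hcs
      have heq : (Finset.univ.filter
          (fun v => v ∈ Submodule.span (ZMod 2) Bgen)).card
          = Nat.card (Submodule.span (ZMod 2) Bgen) := by
        rw [Nat.card_eq_fintype_card, Fintype.card_subtype]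
      rw [heq]
      refine le_trans hcs ?_
      exact Nat.pow_le_pow_right (by norm_num) (le_trans (Finset.card_image_le) hJcard)
    -- cardinality of the full span
    have hcardS : Sfin.card ≤ 2 ^ (m - 1) := by
      set J : Finset (Fin m) := Finset.univ.filter (fun k => k < i) with hJ
      have hSgen' : Sgen = ((J.image p : Finset (Fin n → ZMod 2)) : Set (Fin n → ZMod 2)) := by
        ext u
        simp only [hSgen, Finset.coe_image, Set.mem_image, Finset.mem_coe, hJ,
          Finset.mem_filter, Finset.mem_univ, true_and, Set.mem_setOf_eq]
      have hJcard : J.card ≤ m - 1 := by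
        have hinj : J.card ≤ (Finset.range (i : ℕ)).card := by
          refine Finset.card_le_card_of_injOn (fun k : Fin m => (k : ℕ)) ?_ ?_
          · intro k hk
            simp only [hJ, Finset.mem_coe, Finset.mem_filter, Finset.mem_univ, true_and] at hk
            simpa [Finset.mem_range] using (hk : (k : ℕ) < (i : ℕ))
          · exact fun a _ b _ h => Fin.ext h
        have h2 := i.2
        simp only [Finset.card_range] at hinj
        omega
      have hcs := card_span_le (J.image p)
      rw [← hSgen'] at hcs
      have heq : Sfin.card = Nat.card (Submodule.span (ZMod 2) Sgen) := by
        rw [Nat.card_eq_fintype_card, Fintype.card_subtype]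
      rw [heq]
      refine le_trans hcs ?_
      exact Nat.pow_le_pow_right (by norm_num) (le_trans (Finset.card_image_le) hJcard)
    -- the good set is large
    have hGcard : D ≤ G.card := by
      have hsplit := Finset.card_filter_add_card_filter_not
        (s := Finset.univ) (p := fun v => v ∈ Submodule.span (ZMod 2) Bgen)
      have hV : Fintype.card (Fin n → ZMod 2) = 2 ^ n := by
        simp [ZMod.card]
      simp only [Finset.card_univ, hV] at hsplit
      have hGG : G.card = (Finset.univ.filter
          (fun v => ¬ v ∈ Submodule.span (ZMod 2) Bgen)).card := rfl
      omega
    obtain ⟨v₀, hv₀⟩ := Finset.card_pos.mp (lt_of_lt_of_le hDpos hGcard)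
    have hGood : ∀ v ∈ G, v ≠ 0 ∧ v ∉ Submodule.span (ZMod 2) Bgen := by
      intro v hv
      simp only [hG, Finset.mem_filter, Finset.mem_univ, true_and] at hv
      exact ⟨fun h0 => hv (h0 ▸ Submodule.zero_mem _), hv⟩
    set c : ℝ≥0∞ := F v₀ with hc
    have hFc : ∀ v ∈ G, F v = c := fun v hv => hunif p v v₀ (hGood v hv) (hGood v₀ hv₀)
    -- bad part is at most the span sum
    have hBadE : μ.toOuterMeasure (Bad ∩ Ev p) ≤ ∑ v ∈ Sfin, F v := by
      refine le_trans (measure_mono ?_) (measure_biUnion_finset_le Sfin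
        (fun v => {w : Fin m → Fin n → ZMod 2 | (∀ k, k < i → w k = p k) ∧ w i = v}))
      rintro w ⟨hwB, hwE⟩
      have hgen : {u | ∃ k, k < i ∧ w k = u} = Sgen := by
        ext u
        constructor
        · rintro ⟨k, hk, rfl⟩; exact ⟨k, hk, (hwE k hk).symm⟩
        · rintro ⟨k, hk, rfl⟩; exact ⟨k, hk, hwE k hk⟩
      have hwS : w i ∈ Sfin := by
        simp only [hSfin, Finset.mem_filter, Finset.mem_univ, true_and]
        rw [← hgen]
        exact hwB
      exact Set.mem_biUnion hwS ⟨hwE, rfl⟩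
    -- the span sum
    have hSsum : ∑ v ∈ Sfin, F v ≤ (2 : ℝ≥0∞) ^ (m - 1) * c := by
      have h1 : ∑ v ∈ Sfin.filter (· ∈ G), F v = ∑ v ∈ Sfin, F v := by
        apply Finset.sum_filter_of_ne
        intro v _ hne
        by_contra hvG
        apply hne
        apply hF0
        simp only [hG, Finset.mem_filter, Finset.mem_univ, true_and, not_not] at hvG
        exact Or.inr hvG
      rw [← h1]
      have h2 : ∑ v ∈ Sfin.filter (· ∈ G), F v
          = ((Sfin.filter (· ∈ G)).card : ℝ≥0∞) * c := by
        rw [Finset.sum_congr rfl (fun v hv => hFc v (Finset.mem_filter.mp hv).2)]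
        rw [Finset.sum_const, nsmul_eq_mul]
      rw [h2]
      refine mul_le_mul_left ?_ c
      have h3 : (Sfin.filter (· ∈ G)).card ≤ 2 ^ (m - 1) :=
        le_trans (Finset.card_le_card (Finset.filter_subset _ _)) hcardS
      calc ((Sfin.filter (· ∈ G)).card : ℝ≥0∞) ≤ ((2 ^ (m - 1) : ℕ) : ℝ≥0∞) :=
            Nat.cast_le.2 h3
        _ = (2 : ℝ≥0∞) ^ (m - 1) := by push_cast; ring
    -- the good sum is below the total
    have hGsum : (D : ℝ≥0∞) * c ≤ μ.toOuterMeasure (Ev p) := by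
      have h3 : ∑ v ∈ G, F v ≤ μ.toOuterMeasure (Ev p) := by
        simp only [hF, PMF.toOuterMeasure_apply_fintype]
        rw [Finset.sum_comm]
        refine Finset.sum_le_sum fun x _ => ?_
        calc ∑ v ∈ G, ({w : Fin m → Fin n → ZMod 2 | (∀ k, k < i → w k = p k) ∧ w i = v}).indicator (⇑μ) x
            ≤ ∑ v ∈ G, if v = x i then (Ev p).indicator (⇑μ) x else 0 := by
              refine Finset.sum_le_sum fun v _ => ?_
              by_cases hx : x ∈ {w : Fin m → Fin n → ZMod 2 | (∀ k, k < i → w k = p k) ∧ w i = v}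
              · have hxE : x ∈ Ev p := hx.1
                rw [Set.indicator_of_mem hx, if_pos hx.2.symm,
                  Set.indicator_of_mem hxE]
              · rw [Set.indicator_of_notMem hx]
                exact zero_le
          _ ≤ (Ev p).indicator (⇑μ) x := by
              rw [Finset.sum_ite_eq' G (x i) (fun _ => (Ev p).indicator (⇑μ) x)]
              split_ifs
              · exact le_refl _
              · exact zero_le
      calc (D : ℝ≥0∞) * c ≤ (G.card : ℝ≥0∞) * c := mul_le_mul_left (Nat.cast_le.2 hGcard) c
        _ = ∑ v ∈ G, F v := by
            rw [Finset.sum_congr rfl hFc, Finset.sum_const, nsmul_eq_mul]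
        _ ≤ μ.toOuterMeasure (Ev p) := h3
    -- combine
    have hcle : c ≤ μ.toOuterMeasure (Ev p) / (D : ℝ≥0∞) := by
      rw [ENNReal.le_div_iff_mul_le (Or.inl (by exact_mod_cast hDpos.ne'))
        (Or.inl (ENNReal.natCast_ne_top D))]
      rw [mul_comm]
      exact hGsum
    calc μ.toOuterMeasure (Bad ∩ Ev p) ≤ ∑ v ∈ Sfin, F v := hBadE
      _ ≤ (2 : ℝ≥0∞) ^ (m - 1) * c := hSsum
      _ ≤ (2 : ℝ≥0∞) ^ (m - 1) * (μ.toOuterMeasure (Ev p) / (D : ℝ≥0∞)) :=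
          mul_le_mul_right hcle _
      _ = (2 : ℝ≥0∞) ^ (m - 1) / (D : ℝ≥0∞) * μ.toOuterMeasure (Ev p) := by
          rw [div_eq_mul_inv, div_eq_mul_inv]
          ring
  -- sum over prefixes
  have huniv : μ.toOuterMeasure (Set.univ : Set (Fin m → Fin n → ZMod 2)) = 1 :=
    PMF.toOuterMeasure_apply_eq_one_iff μ Set.univ |>.mpr (Set.subset_univ _)
  calc μ.toOuterMeasure Bad = ∑ p ∈ C, μ.toOuterMeasure (Bad ∩ Ev p) := hdecomp Bad
    _ ≤ ∑ p ∈ C, (2 : ℝ≥0∞) ^ (m - 1) / (D : ℝ≥0∞) * μ.toOuterMeasure (Ev p) :=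
        Finset.sum_le_sum fun p _ => key p
    _ = (2 : ℝ≥0∞) ^ (m - 1) / (D : ℝ≥0∞) * ∑ p ∈ C, μ.toOuterMeasure (Ev p) :=
        (Finset.mul_sum _ _ _).symm
    _ = (2 : ℝ≥0∞) ^ (m - 1) / (D : ℝ≥0∞) := by
        have : ∑ p ∈ C, μ.toOuterMeasure (Ev p)
            = ∑ p ∈ C, μ.toOuterMeasure ((Set.univ : Set (Fin m → Fin n → ZMod 2)) ∩ Ev p) := by
          simp [Set.univ_inter]
        rw [this, ← hdecomp Set.univ, huniv, mul_one]




/-- Random matrix with block-wise independent rows has full row rank with high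
probability.  The rows `w_0, …, w_{m-1} ∈ F_2^n` (with `m = λℓ/2`) are sampled
sequentially; conditioned on the previous rows, each row is uniform over the
nonzero vectors outside the span of the previously sampled rows of its own block
of `λ` consecutive rows (the resampling process).  This is encoded by the
support condition `hsupp` and the conditional-uniformity condition `hunif`.
Then the probability that the rows are not linearly independent (equivalently,
that some `B` has no solution `X` of `A·X = B`) is at most
`(λℓ/2)·(2^{(n+ℓ)/2} + 2^λ)/2^n`. -/
theorem random_blockwise_matrix_full_rank
    (n ℓ lam : ℕ) (hn : 0 < n) (hℓ : 0 < ℓ) (hlam : 0 < lam)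
    (hmle : lam * ℓ / 2 ≤ (n + ℓ) / 2) (hlamle : lam ≤ n / 2 + 1)
    (μ : PMF (Fin (lam * ℓ / 2) → (Fin n → ZMod 2)))
    (hsupp : ∀ i : Fin (lam * ℓ / 2),
      μ.toOuterMeasure {w | w i = 0 ∨ w i ∈ Submodule.span (ZMod 2)
        {u | ∃ k : Fin (lam * ℓ / 2),
          k < i ∧ (k : ℕ) / lam = (i : ℕ) / lam ∧ w k = u}} = 0)
    (hunif : ∀ (i : Fin (lam * ℓ / 2)) (p : Fin (lam * ℓ / 2) → Fin n → ZMod 2)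
      (v v' : Fin n → ZMod 2),
      (v ≠ 0 ∧ v ∉ Submodule.span (ZMod 2)
        {u | ∃ k : Fin (lam * ℓ / 2),
          k < i ∧ (k : ℕ) / lam = (i : ℕ) / lam ∧ p k = u}) →
      (v' ≠ 0 ∧ v' ∉ Submodule.span (ZMod 2)
        {u | ∃ k : Fin (lam * ℓ / 2),
          k < i ∧ (k : ℕ) / lam = (i : ℕ) / lam ∧ p k = u}) →
      μ.toOuterMeasure {w | (∀ k, k < i → w k = p k) ∧ w i = v}
        = μ.toOuterMeasure {w | (∀ k, k < i → w k = p k) ∧ w i = v'}) :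
    (μ.toOuterMeasure {w | ¬ LinearIndependent (ZMod 2) w}).toReal
      ≤ (lam * ℓ / 2 : ℕ) * ((2 : ℝ) ^ ((n + ℓ) / 2) + 2 ^ lam) / 2 ^ n := by
  classical
  have hlamn : lam ≤ n := by omega
  have hDpos : 0 < 2 ^ n - 2 ^ (lam - 1) := by
    have h1 : 2 ^ (lam - 1) < 2 ^ n := Nat.pow_lt_pow_right one_lt_two (by omega)
    omega
  by_cases hm0 : lam * ℓ / 2 = 0
  · have hie : IsEmpty (Fin (lam * ℓ / 2)) := by
      rw [hm0]; exact Fin.isEmpty'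
    have hempty : {w : Fin (lam * ℓ / 2) → Fin n → ZMod 2 |
        ¬ LinearIndependent (ZMod 2) w} = ∅ := by
      ext w
      simp only [Set.mem_setOf_eq, Set.mem_empty_iff_false, iff_false, not_not]
      exact linearIndependent_empty_type
    rw [hempty]
    simp only [measure_empty, ENNReal.toReal_zero]
    positivity
  · have hm1 : 1 ≤ lam * ℓ / 2 := by omega
    have main : μ.toOuterMeasure {w | ¬ LinearIndependent (ZMod 2) w}
        ≤ ((lam * ℓ / 2 : ℕ) : ℝ≥0∞) * ((2 : ℝ≥0∞) ^ (lam * ℓ / 2 - 1)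
            / ((2 ^ n - 2 ^ (lam - 1) : ℕ) : ℝ≥0∞)) := by
      set Bad : Fin (lam * ℓ / 2) → Set (Fin (lam * ℓ / 2) → Fin n → ZMod 2) :=
        fun i => {w | w i ∈ Submodule.span (ZMod 2) {u | ∃ k, k < i ∧ w k = u}} with hBadDef
      have hsub : {w : Fin (lam * ℓ / 2) → Fin n → ZMod 2 |
          ¬ LinearIndependent (ZMod 2) w} ⊆ ⋃ i, Bad i := by
        intro w hw
        by_contra hww
        simp only [Set.mem_iUnion, not_exists] at hww
        exact hw (aux_li w fun i hx => hww i hx)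
      calc μ.toOuterMeasure {w | ¬ LinearIndependent (ZMod 2) w}
          ≤ μ.toOuterMeasure (⋃ i, Bad i) := measure_mono hsub
        _ ≤ ∑ i : Fin (lam * ℓ / 2), μ.toOuterMeasure (Bad i) :=
            measure_iUnion_fintype_le _ _
        _ ≤ ∑ _i : Fin (lam * ℓ / 2), (2 : ℝ≥0∞) ^ (lam * ℓ / 2 - 1)
              / ((2 ^ n - 2 ^ (lam - 1) : ℕ) : ℝ≥0∞) :=
            Finset.sum_le_sum fun i _ => per_index_bound n lam _ hlam hlamn μ i
              (hsupp i) (fun p v v' => hunif i p v v')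
        _ = ((lam * ℓ / 2 : ℕ) : ℝ≥0∞) * ((2 : ℝ≥0∞) ^ (lam * ℓ / 2 - 1)
              / ((2 ^ n - 2 ^ (lam - 1) : ℕ) : ℝ≥0∞)) := by
            rw [Finset.sum_const, Finset.card_univ, Fintype.card_fin, nsmul_eq_mul]
    have hne : ((lam * ℓ / 2 : ℕ) : ℝ≥0∞) * ((2 : ℝ≥0∞) ^ (lam * ℓ / 2 - 1)
        / ((2 ^ n - 2 ^ (lam - 1) : ℕ) : ℝ≥0∞)) ≠ ⊤ := by
      apply ENNReal.mul_ne_top (ENNReal.natCast_ne_top _)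
      exact (ENNReal.div_lt_top (ENNReal.pow_ne_top ENNReal.ofNat_ne_top)
        (by exact_mod_cast hDpos.ne')).ne
    have htr := ENNReal.toReal_mono hne main
    refine le_trans htr ?_
    rw [ENNReal.toReal_mul, ENNReal.toReal_div, ENNReal.toReal_natCast,
      ENNReal.toReal_natCast, ENNReal.toReal_pow, ENNReal.toReal_ofNat]
    rw [mul_div_assoc]
    apply mul_le_mul_of_nonneg_left _ (by positivity)
    have hDr : (0 : ℝ) < ((2 ^ n - 2 ^ (lam - 1) : ℕ) : ℝ) := by exact_mod_cast hDpos
    have hpr : (0 : ℝ) < (2 : ℝ) ^ n := by positivity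
    rw [div_le_div_iff₀ hDr hpr]
    have key := nat_ineq ((n + ℓ) / 2) lam n (lam * ℓ / 2) hm1 hmle hlam hlamn
    exact_mod_cast key
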